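/- Let u, w ∈ S_n with u ≠ w. There exists a decreasing path of length r from u to w in the extended k-Bruhat order (i.e., a path whose edge labels strictly decrease) if and only if there exist transpositions t_{a_1 b_1}, ..., t_{a_r b_r} with w = u·t_{a_1 b_1}⋯t_{a_r b_r}, each step being a k-edge, and the a_i pairwise distinct. Moreover, when such a decreasing path exists it is unique. -/

import Mathlib

/-- `IsKPath k u l` : starting from `u`, the list of position pairs `l`
describes a path of `k`-edges in the Bruhat graph of `S_n`. -/
def IsKPath {n : ℕ} (k : ℕ) : Equiv.Perm (Fin n) → List (Fin n × Fin n) → Prop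
  | _, [] => True
  | u, p :: l => p.1.val < k ∧ k ≤ p.2.val ∧ u p.1 < u p.2 ∧
      IsKPath k (u * Equiv.swap p.1 p.2) l

/-- The labels `τ_i = w_{i-1}(a_i)` of the edges of a path. -/
def pathLabels {n : ℕ} : Equiv.Perm (Fin n) → List (Fin n × Fin n) → List (Fin n)
  | _, [] => []
  | u, p :: l => u p.1 :: pathLabels (u * Equiv.swap p.1 p.2) l

/-- The endpoint `u · t_{a₁b₁} ⋯ t_{a_m b_m}` of a path starting at `u`. -/
def pathEnd {n : ℕ} (u : Equiv.Perm (Fin n)) (l : List (Fin n × Fin n)) : Equiv.Perm (Fin n) :=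
  u * (l.map fun p => Equiv.swap p.1 p.2).prod

/-!
Along a `k`-path the positions `a < k` are only ever moved as first coordinates, since every
second coordinate is `≥ k`. Hence, when the `a_i` are distinct, the label of the `i`-th edge is
just `u (a_i)`, and position `a_i` ends up holding `u (b_i) > u (a_i)`. A decreasing path cannot
repeat a first coordinate: the second visit of `a_i` would carry the label `u (b_i) > u (a_i)`.
Two consecutive edges with distinct first coordinates and increasing labels have distinct second
coordinates, so their transpositions commute and the edges may be exchanged; bubbling the edge of
largest label to the front therefore sorts any path with distinct `a_i` into a decreasing one.
For uniqueness, the `a_i` of a decreasing path are exactly the positions `a < k` moved by `w`,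
their order is forced by the decreasing labels `u (a_i)`, and `w (a_1) = u (b_1)` forces `b_1`.
-/

open Equiv

variable {n k : ℕ}

theorem pathEnd_nil (u : Perm (Fin n)) : pathEnd u [] = u := by
  simp [pathEnd]

theorem pathEnd_cons (u : Perm (Fin n)) (p : Fin n × Fin n) (l : List (Fin n × Fin n)) :
    pathEnd u (p :: l) = pathEnd (u * swap p.1 p.2) l := by
  simp [pathEnd, mul_assoc]

theorem mul_swap_apply_of_lt (u : Perm (Fin n)) {p : Fin n × Fin n} {a : Fin n}
    (hp : k ≤ p.2.val) (ha : a.val < k) (hne : a ≠ p.1) : (u * swap p.1 p.2) a = u a := by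
  rw [Perm.mul_apply, swap_apply_of_ne_of_ne hne (ne_of_apply_ne Fin.val (by omega))]

namespace IsKPath

variable {u : Perm (Fin n)} {p q : Fin n × Fin n} {l : List (Fin n × Fin n)}

theorem tail (h : IsKPath k u (p :: l)) : IsKPath k (u * swap p.1 p.2) l := h.2.2.2

theorem val_lt_of_mem_map_fst (h : IsKPath k u l) {a : Fin n} (ha : a ∈ l.map Prod.fst) :
    a.val < k := by
  induction l generalizing u with
  | nil => cases ha
  | cons p l ih =>
    rw [List.map_cons, List.mem_cons] at ha
    rcases ha with rfl | ha
    · exact h.1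
    · exact ih h.tail ha

theorem pathEnd_apply_of_not_mem (h : IsKPath k u l) {a : Fin n} (ha : a.val < k)
    (hl : a ∉ l.map Prod.fst) : pathEnd u l a = u a := by
  induction l generalizing u with
  | nil => rw [pathEnd_nil]
  | cons p l ih =>
    rw [List.map_cons, List.mem_cons, not_or] at hl
    rw [pathEnd_cons, ih h.tail hl.2, mul_swap_apply_of_lt u h.2.1 ha hl.1]

theorem pathLabels_eq_map (h : IsKPath k u l) (hnd : (l.map Prod.fst).Nodup) :
    pathLabels u l = l.map fun p => u p.1 := by
  induction l generalizing u with
  | nil => rfl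
  | cons p l ih =>
    rw [List.map_cons, List.nodup_cons] at hnd
    rw [pathLabels, ih h.tail hnd.2, List.map_cons]
    refine congrArg _ (List.map_congr_left fun q hq => ?_)
    have hq₁ : q.1 ∈ l.map Prod.fst := List.mem_map_of_mem hq
    exact mul_swap_apply_of_lt u h.2.1 (h.tail.val_lt_of_mem_map_fst hq₁)
      fun he => hnd.1 (he ▸ hq₁)

theorem nodup_of_isChain (h : IsKPath k u l) (hc : (pathLabels u l).IsChain (· > ·)) :
    (l.map Prod.fst).Nodup := by
  induction l generalizing u with
  | nil => exact List.nodup_nil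
  | cons p l ih =>
    have hnd := ih h.tail hc.tail
    refine List.nodup_cons.2 ⟨fun hp => ?_, hnd⟩
    have hmem : u p.2 ∈ pathLabels (u * swap p.1 p.2) l := by
      rw [h.tail.pathLabels_eq_map hnd]
      obtain ⟨q, hq, hq₁⟩ := List.mem_map.1 hp
      exact List.mem_map.2 ⟨q, hq, by simp [hq₁]⟩
    rw [pathLabels, List.isChain_iff_pairwise] at hc
    exact lt_asymm h.2.2.1 (List.rel_of_pairwise_cons hc hmem)

theorem pathEnd_cons_apply_fst (h : IsKPath k u (p :: l)) (hp : p.1 ∉ l.map Prod.fst) :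
    pathEnd u (p :: l) p.1 = u p.2 := by
  rw [pathEnd_cons, h.tail.pathEnd_apply_of_not_mem h.1 hp, Perm.mul_apply, swap_apply_left]

theorem lt_pathEnd_apply (h : IsKPath k u l) (hnd : (l.map Prod.fst).Nodup) {a : Fin n}
    (ha : a ∈ l.map Prod.fst) : u a < pathEnd u l a := by
  induction l generalizing u with
  | nil => cases ha
  | cons p l ih =>
    rw [List.map_cons, List.nodup_cons] at hnd
    rw [List.map_cons, List.mem_cons] at ha
    rcases ha with rfl | ha
    · rw [h.pathEnd_cons_apply_fst hnd.1]
      exact h.2.2.1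
    · rw [pathEnd_cons, ← mul_swap_apply_of_lt u h.2.1 (h.tail.val_lt_of_mem_map_fst ha)
        fun he => hnd.1 (he ▸ ha)]
      exact ih h.tail hnd.2 ha

theorem mem_map_fst_iff (h : IsKPath k u l) (hnd : (l.map Prod.fst).Nodup) {a : Fin n} :
    a ∈ l.map Prod.fst ↔ a.val < k ∧ pathEnd u l a ≠ u a :=
  ⟨fun ha => ⟨h.val_lt_of_mem_map_fst ha, (h.lt_pathEnd_apply hnd ha).ne'⟩,
    fun ⟨hak, hne⟩ => by_contra fun ha => hne (h.pathEnd_apply_of_not_mem hak ha)⟩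

theorem lt_of_mem_tail (h : IsKPath k u (p :: l)) (hc : (pathLabels u (p :: l)).IsChain (· > ·))
    {a : Fin n} (ha : a ∈ l.map Prod.fst) : u a < u p.1 := by
  rw [h.pathLabels_eq_map (h.nodup_of_isChain hc), List.map_cons, List.isChain_iff_pairwise]
    at hc
  obtain ⟨q, hq, rfl⟩ := List.mem_map.1 ha
  exact List.rel_of_pairwise_cons hc (List.mem_map_of_mem (f := fun p => u p.1) hq)

theorem swap_head (h : IsKPath k u (p :: q :: l)) (hpq : p.1 ≠ q.1) (hlt : u p.1 < u q.1) :
    IsKPath k u (q :: p :: l) ∧ pathEnd u (q :: p :: l) = pathEnd u (p :: q :: l) := by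
  obtain ⟨hp₁, hp₂, hpu, hq₁, hq₂, hqu, hl⟩ := h
  have hq₁p : (u * swap p.1 p.2) q.1 = u q.1 := mul_swap_apply_of_lt u hp₂ hq₁ hpq.symm
  -- a common second coordinate would make the label of the second edge `u q.1 < u p.1`
  have hp₂q₂ : p.2 ≠ q.2 := by
    intro he
    rw [hq₁p, ← he, Perm.mul_apply, swap_apply_right] at hqu
    exact lt_asymm hlt hqu
  have hdisj : (swap p.1 p.2).Disjoint (swap q.1 q.2) := by
    refine Perm.disjoint_swap_swap ?_
    have := Fin.val_ne_of_ne hpq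
    have := Fin.val_ne_of_ne hp₂q₂
    simp only [List.nodup_cons, List.mem_cons, List.not_mem_nil, List.nodup_nil, or_false,
      not_false_eq_true, and_true, Fin.ext_iff]
    omega
  have hcomm := hdisj.commute.eq
  have hpq₂ : (u * swap q.1 q.2) p.2 = u p.2 := by
    rw [Perm.mul_apply, swap_apply_of_ne_of_ne (ne_of_apply_ne Fin.val (by omega)) hp₂q₂]
  refine ⟨⟨hq₁, hq₂, ?_, hp₁, hp₂, ?_, ?_⟩, ?_⟩
  · rwa [hq₁p, Perm.mul_apply, swap_apply_of_ne_of_ne (ne_of_apply_ne Fin.val (by omega))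
      hp₂q₂.symm] at hqu
  · rwa [mul_swap_apply_of_lt u hq₂ hp₁ hpq, hpq₂]
  · rwa [mul_assoc, ← hcomm, ← mul_assoc]
  · simp only [pathEnd_cons, mul_assoc, hcomm]

theorem exists_perm_cons_max (h : IsKPath k u (p :: l)) (hnd : ((p :: l).map Prod.fst).Nodup) :
    ∃ q t, (q :: t).Perm (p :: l) ∧ IsKPath k u (q :: t) ∧
      pathEnd u (q :: t) = pathEnd u (p :: l) ∧ ∀ r ∈ t, u r.1 < u q.1 := by
  induction l generalizing u p with
  | nil => exact ⟨p, [], .refl _, h, rfl, by simp⟩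
  | cons p' l ih =>
    rw [List.map_cons, List.nodup_cons] at hnd
    obtain ⟨q, t, hperm, hqt, hend, hmax⟩ := ih h.tail hnd.2
    have hne : ∀ r ∈ q :: t, r.1 ≠ p.1 := fun r hr he =>
      hnd.1 (he ▸ (hperm.map Prod.fst).subset (List.mem_map_of_mem hr))
    have hfix : ∀ r ∈ q :: t, (u * swap p.1 p.2) r.1 = u r.1 := fun r hr =>
      mul_swap_apply_of_lt u h.2.1 (hqt.val_lt_of_mem_map_fst (List.mem_map_of_mem hr)) (hne r hr)
    have hmax' : ∀ r ∈ t, u r.1 < u q.1 := fun r hr => by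
      rw [← hfix r (.tail _ hr), ← hfix q (.head _)]
      exact hmax r hr
    have hpath : IsKPath k u (p :: q :: t) := ⟨h.1, h.2.1, h.2.2.1, hqt⟩
    have hend' : pathEnd u (p :: q :: t) = pathEnd u (p :: p' :: l) := by
      rw [pathEnd_cons, hend, ← pathEnd_cons]
    rcases lt_or_gt_of_ne (u.injective.ne (hne q (.head _)).symm) with hlt | hgt
    · obtain ⟨hpath', hend''⟩ := hpath.swap_head (hne q (.head _)).symm hlt
      exact ⟨q, p :: t, (List.Perm.swap p q t).trans (hperm.cons p), hpath', hend''.trans hend',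
        List.forall_mem_cons.2 ⟨hlt, hmax'⟩⟩
    · exact ⟨p, q :: t, hperm.cons p, hpath, hend',
        List.forall_mem_cons.2 ⟨hgt, fun r hr => (hmax' r hr).trans hgt⟩⟩

theorem exists_perm_isChain {u : Perm (Fin n)} {l : List (Fin n × Fin n)} (h : IsKPath k u l)
    (hnd : (l.map Prod.fst).Nodup) :
    ∃ l', l'.Perm l ∧ IsKPath k u l' ∧ pathEnd u l' = pathEnd u l ∧
      (pathLabels u l').IsChain (· > ·) := by
  cases l with
  | nil => exact ⟨[], .refl _, h, rfl, .nil⟩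
  | cons p l =>
    obtain ⟨q, t, hperm, hqt, hend, hmax⟩ := h.exists_perm_cons_max hnd
    have hnd' := (hperm.map Prod.fst).nodup_iff.2 hnd
    rw [List.map_cons, List.nodup_cons] at hnd'
    have : t.length < (p :: l).length := by simp [← hperm.length_eq]
    obtain ⟨t', hperm', ht', hend', hc⟩ := exists_perm_isChain hqt.tail hnd'.2
    refine ⟨q :: t', (hperm'.cons q).trans hperm, ⟨hqt.1, hqt.2.1, hqt.2.2.1, ht'⟩,
      by rw [pathEnd_cons, hend', ← pathEnd_cons, hend], ?_⟩
    have hnd'' := (hperm'.map Prod.fst).nodup_iff.2 hnd'.2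
    rw [ht'.pathLabels_eq_map hnd''] at hc
    rw [pathLabels, ht'.pathLabels_eq_map hnd'']
    refine List.isChain_cons.2 ⟨fun y hy => ?_, hc⟩
    obtain ⟨r, hr, rfl⟩ := List.mem_map.1 (List.mem_of_mem_head? hy)
    have hr₁ : r.1 ∈ t.map Prod.fst := List.mem_map_of_mem (hperm'.subset hr)
    rw [mul_swap_apply_of_lt u hqt.2.1 (hqt.tail.val_lt_of_mem_map_fst hr₁)
      fun he => hnd'.1 (he ▸ hr₁)]
    exact hmax r (hperm'.subset hr)
termination_by l.length

theorem eq_nil_of_pathEnd_eq_self (h : IsKPath k u l) (hnd : (l.map Prod.fst).Nodup)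
    (he : pathEnd u l = u) : l = [] := by
  cases l with
  | nil => rfl
  | cons p l => exact absurd (DFunLike.congr_fun he p.1) ((h.mem_map_fst_iff hnd).1 (.head _)).2

theorem eq_of_isChain {l₁ l₂ : List (Fin n × Fin n)} (h₁ : IsKPath k u l₁)
    (hc₁ : (pathLabels u l₁).IsChain (· > ·)) (h₂ : IsKPath k u l₂)
    (hc₂ : (pathLabels u l₂).IsChain (· > ·)) (he : pathEnd u l₁ = pathEnd u l₂) : l₁ = l₂ := by
  have hnd₁ := h₁.nodup_of_isChain hc₁
  have hnd₂ := h₂.nodup_of_isChain hc₂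
  induction l₁ generalizing u l₂ with
  | nil => exact (h₂.eq_nil_of_pathEnd_eq_self hnd₂ (by rw [← he, pathEnd_nil])).symm
  | cons p t₁ ih =>
    cases l₂ with
    | nil => exact h₁.eq_nil_of_pathEnd_eq_self hnd₁ (by rw [he, pathEnd_nil])
    | cons q t₂ =>
      have hfst : ∀ a, a ∈ (p :: t₁).map Prod.fst ↔ a ∈ (q :: t₂).map Prod.fst := fun a => by
        rw [h₁.mem_map_fst_iff hnd₁, h₂.mem_map_fst_iff hnd₂, he]
      have hfst₁ : p.1 = q.1 := by
        by_contra hne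
        have hp := List.mem_cons.1 ((hfst p.1).1 (.head _))
        have hq := List.mem_cons.1 ((hfst q.1).2 (.head _))
        exact lt_asymm (h₂.lt_of_mem_tail hc₂ (hp.resolve_left hne))
          (h₁.lt_of_mem_tail hc₁ (hq.resolve_left (Ne.symm hne)))
      rw [List.map_cons, List.nodup_cons] at hnd₁ hnd₂
      have hsnd : p.2 = q.2 := u.injective <| by
        rw [← h₁.pathEnd_cons_apply_fst hnd₁.1, he, hfst₁, h₂.pathEnd_cons_apply_fst hnd₂.1]
      obtain rfl : p = q := Prod.ext hfst₁ hsnd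
      rw [pathEnd_cons, pathEnd_cons] at he
      rw [ih h₁.tail hc₁.tail h₂.tail hc₂.tail he hnd₁.2 hnd₂.2]

end IsKPath

theorem stmt9_general (n k r : ℕ) (u w : Equiv.Perm (Fin n)) :
    ((∃ l : List (Fin n × Fin n), IsKPath k u l ∧ pathEnd u l = w ∧ l.length = r ∧
        List.Chain' (· > ·) (pathLabels u l)) ↔
      (∃ l : List (Fin n × Fin n), IsKPath k u l ∧ pathEnd u l = w ∧ l.length = r ∧
        (l.map Prod.fst).Nodup)) ∧
      ∀ l₁ l₂ : List (Fin n × Fin n),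
        IsKPath k u l₁ → pathEnd u l₁ = w → List.Chain' (· > ·) (pathLabels u l₁) →
        IsKPath k u l₂ → pathEnd u l₂ = w → List.Chain' (· > ·) (pathLabels u l₂) →
        l₁ = l₂ := by
  refine ⟨⟨fun ⟨l, h, hw, hr, hc⟩ => ⟨l, h, hw, hr, h.nodup_of_isChain hc⟩, ?_⟩,
    fun l₁ l₂ h₁ hw₁ hc₁ h₂ hw₂ hc₂ => h₁.eq_of_isChain hc₁ h₂ hc₂ (hw₁.trans hw₂.symm)⟩
  rintro ⟨l, h, hw, hr, hnd⟩
  obtain ⟨l', hperm, h', hw', hc'⟩ := h.exists_perm_isChain hnd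
  exact ⟨l', h', hw'.trans hw, hperm.length_eq.trans hr, hc'⟩

/-- There is a decreasing path (strictly decreasing labels) of length `r`
from `u` to `w ≠ u` in the extended `k`-Bruhat order iff `w` can be reached
from `u` by `r` `k`-edges whose first coordinates `a₁,…,a_r` are pairwise
distinct; moreover the decreasing path, when it exists, is unique. -/
theorem stmt9 (n k r : ℕ) (u w : Equiv.Perm (Fin n)) (hne : u ≠ w) :
    ((∃ l : List (Fin n × Fin n), IsKPath k u l ∧ pathEnd u l = w ∧ l.length = r ∧
        List.Chain' (· > ·) (pathLabels u l)) ↔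
      (∃ l : List (Fin n × Fin n), IsKPath k u l ∧ pathEnd u l = w ∧ l.length = r ∧
        (l.map Prod.fst).Nodup)) ∧
      ∀ l₁ l₂ : List (Fin n × Fin n),
        IsKPath k u l₁ → pathEnd u l₁ = w → List.Chain' (· > ·) (pathLabels u l₁) →
        IsKPath k u l₂ → pathEnd u l₂ = w → List.Chain' (· > ·) (pathLabels u l₂) →
        l₁ = l₂ :=
  stmt9_general n k r u w
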